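/- arXiv:1502.03259 — 3 statements merged into one kernel-verified Lean document; each statement's English description precedes it below -/
import Mathlib

section
/- Let V be a real vector space, let a : V → V → ℝ be a symmetric positive semidefinite bilinear form, let P ⊆ V be a finite-dimensional subspace, let K = {p ∈ P : a(p,q) = 0 for all q ∈ P} be the kernel of a restricted to P, and let b : V → V → ℝ be a symmetric bilinear form whose restriction to K is positive definite. Then for every v ∈ V there exists a unique element Πv ∈ P such that a(Πv, q) = a(v, q) for all q ∈ P and b(Πv, k) = b(v, k) for all k ∈ K. -/
/-!
The projection is built in two steps. First some `p₀ ∈ P` solves the `a`-equations: a symmetric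
form on a finite-dimensional space has the annihilator of its kernel as range, and `q ↦ a v q`
annihilates the kernel `K` of `a` on `P`, because by Cauchy–Schwarz an `a`-isotropic vector is
`a`-orthogonal to everything. Then a correction `k₀ ∈ K`, invisible to the `a`-equations, fixes
the `b`-equations: `b` is anisotropic, hence nondegenerate, on `K`. Two solutions differ by an
element of `K` that is `b`-isotropic, hence zero.
-/

open LinearMap Module

namespace LinearMap.BilinForm

variable {𝕜 M : Type*} [Field 𝕜] [AddCommGroup M] [Module 𝕜 M]

theorem range_eq_dualAnnihilator_ker [FiniteDimensional 𝕜 M] {B : LinearMap.BilinForm 𝕜 M}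
    (hB : B.IsSymm) : range B = (ker B).dualAnnihilator := by
  have hB_eq : B = B.dualMap ∘ₗ Dual.eval 𝕜 M := by
    ext x y
    exact hB.eq x y
  rw [← range_dualMap_eq_dualAnnihilator_ker]
  nth_rw 1 [hB_eq]
  rw [range_comp, range_eq_top.mpr (bijective_dual_eval 𝕜 M).surjective, Submodule.map_top]

theorem nondegenerate_of_anisotropic [FiniteDimensional 𝕜 M] {B : LinearMap.BilinForm 𝕜 M}
    (hB : ∀ x, B x x = 0 → x = 0) : B.Nondegenerate :=
  .ofSeparatingLeft fun x hx => hB x (hx x)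

variable {V : Type*} [AddCommGroup V] [Module 𝕜 V]

theorem exists_mem_forall_apply_eq_of_anisotropic (b : LinearMap.BilinForm 𝕜 V)
    (N : Submodule 𝕜 V) [FiniteDimensional 𝕜 N] (hb : ∀ n ∈ N, b n n = 0 → n = 0) (v : V) :
    ∃ n ∈ N, ∀ m ∈ N, b n m = b v m := by
  have hN : (b.restrict N).Nondegenerate :=
    nondegenerate_of_anisotropic fun n hn => Subtype.ext (hb n n.2 hn)
  let n := ((b.restrict N).toDual hN).symm ((b v).domRestrict N)
  exact ⟨n, n.2, fun m hm =>
    apply_toDual_symm_apply (hB := hN) ((b v).domRestrict N) ⟨m, hm⟩⟩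

variable [LinearOrder 𝕜] [IsStrictOrderedRing 𝕜]

theorem exists_mem_forall_apply_eq_of_nonneg (a : LinearMap.BilinForm 𝕜 V) (ha : a.IsSymm)
    (ha_nonneg : ∀ v, 0 ≤ a v v) (P : Submodule 𝕜 V) [FiniteDimensional 𝕜 P] (v : V) :
    ∃ p ∈ P, ∀ q ∈ P, a p q = a v q := by
  have hv : (a v).domRestrict P ∈ (ker (a.restrict P)).dualAnnihilator := by
    rw [Submodule.mem_dualAnnihilator]
    intro k hk
    have hak : a k = 0 := mem_ker.mp <|
      (a.apply_apply_same_eq_zero_iff ha_nonneg (isSymm_iff.mp ha)).mp (LinearMap.congr_fun hk k)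
    change a v k = 0
    rw [ha.eq, hak, LinearMap.zero_apply]
  rw [← range_eq_dualAnnihilator_ker (ha.restrict P)] at hv
  obtain ⟨p, hp⟩ := hv
  exact ⟨p, p.2, fun q hq => LinearMap.congr_fun hp ⟨q, hq⟩⟩

end LinearMap.BilinForm

open LinearMap.BilinForm

theorem stmt_0_general {V : Type*} [AddCommGroup V] [Module ℝ V]
    (a b : LinearMap.BilinForm ℝ V)
    (ha_symm : ∀ v w : V, a v w = a w v)
    (ha_psd : ∀ v : V, 0 ≤ a v v)
    (P : Submodule ℝ V) (hP : FiniteDimensional ℝ P)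
    (hb_def : ∀ k : V, k ∈ P → (∀ q ∈ P, a k q = 0) → b k k = 0 → k = 0) :
    ∀ v : V, ∃! p : V, p ∈ P ∧ (∀ q ∈ P, a p q = a v q) ∧
      (∀ k : V, k ∈ P → (∀ q ∈ P, a k q = 0) → b p k = b v k) := by
  intro v
  let K := P ⊓ a.flip.orthogonal P
  have mem_K (k : V) : k ∈ K ↔ k ∈ P ∧ ∀ q ∈ P, a k q = 0 := by simp [K]
  have : FiniteDimensional ℝ K := Submodule.finiteDimensional_inf_left P _
  obtain ⟨p₀, hp₀P, hp₀⟩ := exists_mem_forall_apply_eq_of_nonneg a ⟨ha_symm⟩ ha_psd P v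
  obtain ⟨k₀, hk₀K, hk₀⟩ := exists_mem_forall_apply_eq_of_anisotropic b K
    (fun k hk => hb_def k ((mem_K k).1 hk).1 ((mem_K k).1 hk).2) (v - p₀)
  obtain ⟨hk₀P, hk₀a⟩ := (mem_K k₀).1 hk₀K
  refine ⟨p₀ + k₀, ⟨P.add_mem hp₀P hk₀P, fun q hq => ?_, fun k hkP hka => ?_⟩, ?_⟩
  · simp [hp₀ q hq, hk₀a q hq]
  · simp [hk₀ k ((mem_K k).2 ⟨hkP, hka⟩)]
  · rintro p ⟨hpP, hpa, hpb⟩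
    set d := p - (p₀ + k₀) with hd_def
    have hdP : d ∈ P := P.sub_mem hpP (P.add_mem hp₀P hk₀P)
    have hda : ∀ q ∈ P, a d q = 0 := fun q hq => by simp [d, hpa q hq, hp₀ q hq, hk₀a q hq]
    have hdb : b d d = 0 := by
      rw [show b d = b p - b p₀ - b k₀ by rw [hd_def, map_sub, map_add, sub_add_eq_sub_sub]]
      simp [hpb d hdP hda, hk₀ d ((mem_K d).2 ⟨hdP, hda⟩)]
    exact sub_eq_zero.mp (hb_def d hdP hda hdb)

/-- Abstract well-posedness of the VEM projection operators.
`a` is a symmetric positive semidefinite bilinear form, `P` a finite-dimensional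
subspace, `K = {k ∈ P : a(k,q) = 0 ∀ q ∈ P}` the kernel of `a` restricted to `P`,
and `b` a symmetric bilinear form that is positive definite on `K`.  Then every
`v` has a unique projection `p ∈ P` with `a(p,q) = a(v,q)` for all `q ∈ P` and
`b(p,k) = b(v,k)` for all `k ∈ K`. -/
theorem stmt_0 {V : Type*} [AddCommGroup V] [Module ℝ V]
    (a b : LinearMap.BilinForm ℝ V)
    (ha_symm : ∀ v w : V, a v w = a w v)
    (ha_psd : ∀ v : V, 0 ≤ a v v)
    (P : Submodule ℝ V) (hP : FiniteDimensional ℝ P)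
    (hb_symm : ∀ v w : V, b v w = b w v)
    (hb_psd : ∀ k : V, k ∈ P → (∀ q ∈ P, a k q = 0) → 0 ≤ b k k)
    (hb_def : ∀ k : V, k ∈ P → (∀ q ∈ P, a k q = 0) → b k k = 0 → k = 0) :
    ∀ v : V, ∃! p : V, p ∈ P ∧ (∀ q ∈ P, a p q = a v q) ∧
      (∀ k : V, k ∈ P → (∀ q ∈ P, a k q = 0) → b p k = b v k) :=
  stmt_0_general a b ha_symm ha_psd P hP hb_def
end

section
/- Let V be a real vector space, let a : V → V → ℝ be a symmetric positive semidefinite bilinear form, let P ⊆ V be a subspace, and let Π : V → V be a linear map with range contained in P such that Πp = p for all p ∈ P and a(v − Πv, q) = 0 for all v ∈ V and all q ∈ P. Let s : V → V → ℝ be a symmetric bilinear form and let 0 < c₀ ≤ c₁ be constants such that c₀ · a(v − Πv, v − Πv) ≤ s(v − Πv, v − Πv) ≤ c₁ · a(v − Πv, v − Πv) for all v ∈ V. Define a_h(v, w) = a(Πv, Πw) + s(v − Πv, w − Πw). Then min(1, c₀) · a(v, v) ≤ a_h(v, v) ≤ max(1, c₁) · a(v, v) for all v ∈ V. -/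
/-- Stability of the discrete virtual element bilinear form
`a_h(v,w) = a(projv,projw) + s(v-projv, w-projv)`: if the stabilization `s` is equivalent to
`a` on the range of `Id - proj` with constants `c₀ ≤ c₁`, then
`min(1,c₀)·a(v,v) ≤ a_h(v,v) ≤ max(1,c₁)·a(v,v)` for all `v`. -/
theorem stmt_3 {V : Type*} [AddCommGroup V] [Module ℝ V]
    (a s : LinearMap.BilinForm ℝ V)
    (ha_symm : ∀ v w : V, a v w = a w v)
    (ha_psd : ∀ v : V, 0 ≤ a v v)
    (P : Submodule ℝ V) (proj : V →ₗ[ℝ] V)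
    (hrange : ∀ v : V, proj v ∈ P)
    (hproj : ∀ p ∈ P, proj p = p)
    (horth : ∀ v : V, ∀ q ∈ P, a (v - proj v) q = 0)
    (hs_symm : ∀ v w : V, s v w = s w v)
    (c₀ c₁ : ℝ) (hc₀ : 0 < c₀) (hc₀c₁ : c₀ ≤ c₁)
    (hlow : ∀ v : V, c₀ * a (v - proj v) (v - proj v) ≤ s (v - proj v) (v - proj v))
    (hup : ∀ v : V, s (v - proj v) (v - proj v) ≤ c₁ * a (v - proj v) (v - proj v)) :
    ∀ v : V,
      min 1 c₀ * a v v ≤ a (proj v) (proj v) + s (v - proj v) (v - proj v) ∧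
      a (proj v) (proj v) + s (v - proj v) (v - proj v) ≤ max 1 c₁ * a v v := by
  intro v
  set d := v - proj v with hd
  have hcross : a d (proj v) = 0 := horth v (proj v) (hrange v)
  have hpyth : a v v = a (proj v) (proj v) + a d d := by
    have hv : v = d + proj v := by simp [hd]
    have hcross' : a (proj v) d = 0 := by rw [ha_symm]; exact hcross
    calc a v v = a (d + proj v) (d + proj v) := by rw [← hv]
    _ = a d d + a d (proj v) + (a (proj v) d + a (proj v) (proj v)) := by
        simp only [map_add, LinearMap.add_apply]; linarith
    _ = a (proj v) (proj v) + a d d := by rw [hcross, hcross']; ring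
  have hdd : 0 ≤ a d d := ha_psd d
  have hpp : 0 ≤ a (proj v) (proj v) := ha_psd (proj v)
  constructor
  · have h1 : min 1 c₀ * a (proj v) (proj v) ≤ a (proj v) (proj v) :=
      mul_le_of_le_one_left hpp (min_le_left _ _)
    have h2 : min 1 c₀ * a d d ≤ s d d := by
      calc min 1 c₀ * a d d ≤ c₀ * a d d :=
            mul_le_mul_of_nonneg_right (min_le_right _ _) hdd
      _ ≤ s d d := hlow v
    calc min 1 c₀ * a v v = min 1 c₀ * a (proj v) (proj v) + min 1 c₀ * a d d := by
          rw [hpyth]; ring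
    _ ≤ a (proj v) (proj v) + s d d := add_le_add h1 h2
  · have h1 : a (proj v) (proj v) ≤ max 1 c₁ * a (proj v) (proj v) :=
      le_mul_of_one_le_left hpp (le_max_left _ _)
    have h2 : s d d ≤ max 1 c₁ * a d d := by
      calc s d d ≤ c₁ * a d d := hup v
      _ ≤ max 1 c₁ * a d d := mul_le_mul_of_nonneg_right (le_max_right _ _) hdd
    calc a (proj v) (proj v) + s d d ≤ max 1 c₁ * a (proj v) (proj v) + max 1 c₁ * a d d :=
          add_le_add h1 h2
    _ = max 1 c₁ * a v v := by rw [hpyth]; ring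
end

section
/- Let f : ℝ² → ℝ be four times continuously differentiable with compact support, and suppose there exists a polynomial p in two variables of total degree at most 2 such that (Δ (Δ f)) x = p(x) for all x ∈ ℝ². Then f is identically zero. -/
/-
The bilaplacian `Δ (Δ f)` has compact support, and a polynomial that vanishes outside a compact
set vanishes on a box with infinite sides, hence is the zero polynomial. So `Δ f` and then `f`
are compactly supported harmonic functions on the plane. Transported to `ℂ` by a linear isometry
they are bounded harmonic functions, hence constant by Liouville's theorem, and a compactly
supported constant on a noncompact space is zero.
-/

/-- The Laplacian of `f : ℝ² → ℝ`: the trace of the Hessian, i.e. the sum of the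
pure second partial derivatives. -/
noncomputable def lap (f : EuclideanSpace ℝ (Fin 2) → ℝ)
    (x : EuclideanSpace ℝ (Fin 2)) : ℝ :=
  ∑ i : Fin 2,
    iteratedFDeriv ℝ 2 f x ![EuclideanSpace.single i 1, EuclideanSpace.single i 1]

open InnerProductSpace Laplacian Set

namespace MvPolynomial

theorem eq_zero_of_hasCompactSupport_eval {ι : Type*} [Fintype ι] [Nonempty ι]
    {p : MvPolynomial ι ℝ} (hp : HasCompactSupport fun x => eval x p) : p = 0 := by
  obtain ⟨R, hR⟩ := hp.isCompact.isBounded.subset_closedBall 0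
  refine funext_set (fun _ => Ioi R) (fun _ => Ioi_infinite R) fun x hx => ?_
  obtain ⟨i⟩ := ‹Nonempty ι›
  have hxR : R < ‖x‖ := (hx i trivial).out.trans_le ((le_abs_self _).trans (norm_le_pi_norm x i))
  rw [map_zero]
  exact image_eq_zero_of_notMem_tsupport (f := fun x => eval x p) fun hmem => by
    simpa using hxR.trans_le (mem_closedBall_zero_iff.mp (hR hmem))

end MvPolynomial

section Laplacian

variable {E : Type*} [NormedAddCommGroup E] [InnerProductSpace ℝ E] [FiniteDimensional ℝ E]
  {E' : Type*} [NormedAddCommGroup E'] [InnerProductSpace ℝ E'] [FiniteDimensional ℝ E']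
  {F : Type*} [NormedAddCommGroup F] [NormedSpace ℝ F] {f : E → F}

theorem ContDiff.laplacian {n : ℕ∞} (hf : ContDiff ℝ (n + 2) f) : ContDiff ℝ n (Δ f) := by
  rw [laplacian_eq_iteratedFDeriv_stdOrthonormalBasis]
  refine ContDiff.sum fun i _ => ?_
  exact (ContinuousMultilinearMap.apply ℝ (fun _ : Fin 2 => E) F _).contDiff.comp
    (hf.iteratedFDeriv_right le_rfl)

theorem HasCompactSupport.laplacian (hf : HasCompactSupport f) : HasCompactSupport (Δ f) := by
  let b := stdOrthonormalBasis ℝ E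
  have hΔ : Δ f = (fun g : E [×2]→L[ℝ] F => ∑ i, g ![b i, b i]) ∘ _root_.iteratedFDeriv ℝ 2 f :=
    laplacian_eq_iteratedFDeriv_orthonormalBasis f b
  rw [hΔ]
  exact (hf.iteratedFDeriv 2).comp_left (by simp)

theorem laplacian_comp_linearIsometryEquiv (e : E' ≃ₗᵢ[ℝ] E) (f : E → F) :
    Δ (f ∘ e) = Δ f ∘ e := by
  let b := stdOrthonormalBasis ℝ E'
  rw [laplacian_eq_iteratedFDeriv_orthonormalBasis (f ∘ e) b,
    laplacian_eq_iteratedFDeriv_orthonormalBasis f (b.map e)]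
  ext x
  have h := e.toContinuousLinearEquiv.iteratedFDerivWithin_comp_right f uniqueDiffOn_univ
    (mem_univ (e x)) 2
  rw [preimage_univ, iteratedFDerivWithin_univ, iteratedFDerivWithin_univ] at h
  refine Finset.sum_congr rfl fun i _ => ?_
  rw [show f ∘ e = f ∘ e.toContinuousLinearEquiv from rfl, h,
    ContinuousMultilinearMap.compContinuousLinearMap_apply]
  congr 1
  ext j
  fin_cases j <;> rfl

theorem HarmonicAt.comp_linearIsometryEquiv {x : E'} (e : E' ≃ₗᵢ[ℝ] E) (hf : HarmonicAt f (e x)) :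
    HarmonicAt (f ∘ e) x := by
  refine ⟨hf.1.comp x e.contDiff.contDiffAt, ?_⟩
  rw [laplacian_comp_linearIsometryEquiv]
  exact hf.2.comp_tendsto e.continuous.continuousAt

theorem harmonicOnNhd_univ_of_laplacian_eq_zero (hf : ContDiff ℝ 2 f) (hΔ : Δ f = 0) :
    HarmonicOnNhd f univ :=
  fun _ _ => ⟨hf.contDiffAt, hΔ ▸ Filter.EventuallyEq.rfl⟩

theorem HarmonicOnNhd.eq_zero_of_hasCompactSupport (hE : Module.finrank ℝ E = 2)
    (hf : HarmonicOnNhd f univ) (hs : HasCompactSupport f) : f = 0 := by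
  let e : ℂ ≃ₗᵢ[ℝ] E :=
    Complex.orthonormalBasisOneI.equiv (stdOrthonormalBasis ℝ E) (finCongr hE.symm)
  have hg : HarmonicOnNhd (f ∘ e) univ := fun z _ =>
    HarmonicAt.comp_linearIsometryEquiv e (hf (e z) trivial)
  have hgs : HasCompactSupport (f ∘ e) := hs.comp_homeomorph e.toHomeomorph
  have hconst := bounded_harmonic_on_complex_plane_is_constant (f ∘ e) hg
    (hgs.isCompact_range (continuousOn_univ.mp hg.contDiffOn.continuousOn)).isBounded
  obtain ⟨z, hz⟩ := (ne_univ_iff_exists_notMem _).mp hgs.isCompact.ne_univ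
  ext x
  calc f x = (f ∘ e) (e.symm x) := by simp
    _ = (f ∘ e) z := hconst _ _
    _ = 0 := image_eq_zero_of_notMem_tsupport hz

end Laplacian

theorem lap_eq_laplacian (f : EuclideanSpace ℝ (Fin 2) → ℝ) : lap f = Δ f := by
  rw [laplacian_eq_iteratedFDeriv_orthonormalBasis f (EuclideanSpace.basisFun (Fin 2) ℝ)]
  ext x
  simp [lap]

theorem stmt_8_general (f : EuclideanSpace ℝ (Fin 2) → ℝ)
    (hf : ContDiff ℝ 4 f) (hsupp : HasCompactSupport f)
    (p : MvPolynomial (Fin 2) ℝ)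
    (hp : ∀ x : EuclideanSpace ℝ (Fin 2),
      lap (lap f) x = MvPolynomial.eval (fun i => x i) p) :
    ∀ x, f x = 0 := by
  simp only [lap_eq_laplacian] at hp
  have hdim : Module.finrank ℝ (EuclideanSpace ℝ (Fin 2)) = 2 := finrank_euclideanSpace_fin
  have hp_zero : p = 0 := by
    have hpoly : (fun y => MvPolynomial.eval y p) = Δ (Δ f) ∘ (PiLp.homeomorph 2 _).symm :=
      funext fun y => (hp _).symm
    exact MvPolynomial.eq_zero_of_hasCompactSupport_eval
      (hpoly ▸ hsupp.laplacian.laplacian.comp_homeomorph _)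
  have hΔΔ : Δ (Δ f) = 0 := funext fun x => by simp [hp, hp_zero]
  have hΔ : Δ f = 0 := HarmonicOnNhd.eq_zero_of_hasCompactSupport hdim
    (harmonicOnNhd_univ_of_laplacian_eq_zero (hf.laplacian (n := 2)) hΔΔ) hsupp.laplacian
  have hf_zero : f = 0 := HarmonicOnNhd.eq_zero_of_hasCompactSupport hdim
    (harmonicOnNhd_univ_of_laplacian_eq_zero (hf.of_le (by norm_num)) hΔ) hsupp
  exact congrFun hf_zero

/-- a `C⁴` compactly supported function on the plane whose
bilaplacian is a polynomial of total degree at most 2 vanishes identically. -/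
theorem stmt_8 (f : EuclideanSpace ℝ (Fin 2) → ℝ)
    (hf : ContDiff ℝ 4 f) (hsupp : HasCompactSupport f)
    (p : MvPolynomial (Fin 2) ℝ) (hdeg : p.totalDegree ≤ 2)
    (hp : ∀ x : EuclideanSpace ℝ (Fin 2),
      lap (lap f) x = MvPolynomial.eval (fun i => x i) p) :
    ∀ x, f x = 0 :=
  stmt_8_general f hf hsupp p hp
end
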